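/- Let A be symmetric with Ā positive definite, and let (η,ε) be the unit quaternion of X in SO(3). Then ‖ψ(AX)‖² = 4εᵀĀ²ε·(1 - ‖ε‖²cos²(φ)), where φ is the angle between ε and Āε (for ε ≠ 0; the identity holds with the convention that both sides vanish when ε = 0). -/
import Mathlib


open Matrix

noncomputable def skew (u : Fin 3 → ℝ) : Matrix (Fin 3) (Fin 3) ℝ :=
  !![0, -u 2, u 1; u 2, 0, -u 0; -u 1, u 0, 0]

/-- `ψ(M) = [P_a(M)]_⊗`, the vector of the anti-symmetric part of `M`. -/
noncomputable def psi (M : Matrix (Fin 3) (Fin 3) ℝ) : Fin 3 → ℝ :=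
  ![(M 2 1 - M 1 2) / 2, (M 0 2 - M 2 0) / 2, (M 1 0 - M 0 1) / 2]

/-- `Ā = (tr(A)·I - A)/2`. -/
noncomputable def barM (A : Matrix (Fin 3) (Fin 3) ℝ) : Matrix (Fin 3) (Fin 3) ℝ :=
  (1 / 2 : ℝ) • (A.trace • (1 : Matrix (Fin 3) (Fin 3) ℝ) - A)

set_option maxHeartbeats 1000000 in
theorem psi_norm_quaternion (A X : Matrix (Fin 3) (Fin 3) ℝ) (η φ : ℝ) (ε : Fin 3 → ℝ)
    (hA : Aᵀ = A) (hPD : (barM A).PosDef)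
    (hq : η ^ 2 + ε ⬝ᵥ ε = 1)
    (hX : X = 1 + (2 : ℝ) • (skew ε) ^ 2 + (2 * η) • skew ε)
    (hφ : ε ⬝ᵥ (barM A *ᵥ ε)
      = Real.sqrt (ε ⬝ᵥ ε) * Real.sqrt ((barM A *ᵥ ε) ⬝ᵥ (barM A *ᵥ ε)) * Real.cos φ) :
    psi (A * X) ⬝ᵥ psi (A * X)
      = 4 * (ε ⬝ᵥ (barM A *ᵥ (barM A *ᵥ ε))) * (1 - (ε ⬝ᵥ ε) * (Real.cos φ) ^ 2) := by
  have h01 : A 0 1 = A 1 0 := by conv_lhs => rw [← hA, transpose_apply]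
  have h02 : A 0 2 = A 2 0 := by conv_lhs => rw [← hA, transpose_apply]
  have h12 : A 1 2 = A 2 1 := by conv_lhs => rw [← hA, transpose_apply]
  have hee : (0:ℝ) ≤ ε ⬝ᵥ ε := by
    simp only [dotProduct, Fin.sum_univ_three, ← sq]; positivity
  have hbb0 : (0:ℝ) ≤ (barM A *ᵥ ε) ⬝ᵥ (barM A *ᵥ ε) := by
    simp only [dotProduct, Fin.sum_univ_three, ← sq]; positivity
  have hsq : (ε ⬝ᵥ (barM A *ᵥ ε)) ^ 2
      = (ε ⬝ᵥ ε) * ((barM A *ᵥ ε) ⬝ᵥ (barM A *ᵥ ε)) * Real.cos φ ^ 2 := by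
    rw [hφ, mul_pow, mul_pow, Real.sq_sqrt hee, Real.sq_sqrt hbb0]
  have he : ε ⬝ᵥ ε = ε 0 ^ 2 + ε 1 ^ 2 + ε 2 ^ 2 := by
    simp only [dotProduct, Fin.sum_univ_three]; ring
  have hs : ε ⬝ᵥ (barM A *ᵥ ε) = ε 0 * (((A 0 0 + A 1 1 + A 2 2) * ε 0 - (A 0 0 * ε 0 + A 1 0 * ε 1 + A 2 0 * ε 2)) / 2) + ε 1 * (((A 0 0 + A 1 1 + A 2 2) * ε 1 - (A 1 0 * ε 0 + A 1 1 * ε 1 + A 2 1 * ε 2)) / 2) + ε 2 * (((A 0 0 + A 1 1 + A 2 2) * ε 2 - (A 2 0 * ε 0 + A 2 1 * ε 1 + A 2 2 * ε 2)) / 2) := by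
    simp [barM, dotProduct, mulVec, Fin.sum_univ_three, Matrix.trace, Matrix.one_apply, Fin.isValue]
    simp only [h01, h02, h12]; ring
  have hbb : (barM A *ᵥ ε) ⬝ᵥ (barM A *ᵥ ε) = (((A 0 0 + A 1 1 + A 2 2) * ε 0 - (A 0 0 * ε 0 + A 1 0 * ε 1 + A 2 0 * ε 2)) / 2)^2 + (((A 0 0 + A 1 1 + A 2 2) * ε 1 - (A 1 0 * ε 0 + A 1 1 * ε 1 + A 2 1 * ε 2)) / 2)^2 + (((A 0 0 + A 1 1 + A 2 2) * ε 2 - (A 2 0 * ε 0 + A 2 1 * ε 1 + A 2 2 * ε 2)) / 2)^2 := by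
    simp [barM, dotProduct, mulVec, Fin.sum_univ_three, Matrix.trace, Matrix.one_apply, Fin.isValue]
    simp only [h01, h02, h12]; ring
  have hR : ε ⬝ᵥ (barM A *ᵥ (barM A *ᵥ ε)) = (((A 0 0 + A 1 1 + A 2 2) * ε 0 - (A 0 0 * ε 0 + A 1 0 * ε 1 + A 2 0 * ε 2)) / 2)^2 + (((A 0 0 + A 1 1 + A 2 2) * ε 1 - (A 1 0 * ε 0 + A 1 1 * ε 1 + A 2 1 * ε 2)) / 2)^2 + (((A 0 0 + A 1 1 + A 2 2) * ε 2 - (A 2 0 * ε 0 + A 2 1 * ε 1 + A 2 2 * ε 2)) / 2)^2 := by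
    simp [barM, dotProduct, mulVec, Fin.sum_univ_three, Matrix.trace, Matrix.one_apply, Fin.isValue]
    simp only [h01, h02, h12]; ring
  have hp0 : psi (A * X) 0 = 2 * η * (((A 0 0 + A 1 1 + A 2 2) * ε 0 - (A 0 0 * ε 0 + A 1 0 * ε 1 + A 2 0 * ε 2)) / 2) - 2 * (ε 1 * (((A 0 0 + A 1 1 + A 2 2) * ε 2 - (A 2 0 * ε 0 + A 2 1 * ε 1 + A 2 2 * ε 2)) / 2) - ε 2 * (((A 0 0 + A 1 1 + A 2 2) * ε 1 - (A 1 0 * ε 0 + A 1 1 * ε 1 + A 2 1 * ε 2)) / 2)) := by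
    subst hX; simp [psi, skew, Matrix.mul_apply, Fin.sum_univ_three, Matrix.one_apply, pow_two, Fin.isValue]
    simp only [h01, h02, h12]; ring
  have hp1 : psi (A * X) 1 = 2 * η * (((A 0 0 + A 1 1 + A 2 2) * ε 1 - (A 1 0 * ε 0 + A 1 1 * ε 1 + A 2 1 * ε 2)) / 2) - 2 * (ε 2 * (((A 0 0 + A 1 1 + A 2 2) * ε 0 - (A 0 0 * ε 0 + A 1 0 * ε 1 + A 2 0 * ε 2)) / 2) - ε 0 * (((A 0 0 + A 1 1 + A 2 2) * ε 2 - (A 2 0 * ε 0 + A 2 1 * ε 1 + A 2 2 * ε 2)) / 2)) := by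
    subst hX; simp [psi, skew, Matrix.mul_apply, Fin.sum_univ_three, Matrix.one_apply, pow_two, Fin.isValue]
    simp only [h01, h02, h12]; ring
  have hp2 : psi (A * X) 2 = 2 * η * (((A 0 0 + A 1 1 + A 2 2) * ε 2 - (A 2 0 * ε 0 + A 2 1 * ε 1 + A 2 2 * ε 2)) / 2) - 2 * (ε 0 * (((A 0 0 + A 1 1 + A 2 2) * ε 1 - (A 1 0 * ε 0 + A 1 1 * ε 1 + A 2 1 * ε 2)) / 2) - ε 1 * (((A 0 0 + A 1 1 + A 2 2) * ε 0 - (A 0 0 * ε 0 + A 1 0 * ε 1 + A 2 0 * ε 2)) / 2)) := by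
    subst hX; simp [psi, skew, Matrix.mul_apply, Fin.sum_univ_three, Matrix.one_apply, pow_two, Fin.isValue]
    simp only [h01, h02, h12]; ring
  rw [he, hs, hbb] at hsq
  rw [hR, he]
  rw [show psi (A * X) ⬝ᵥ psi (A * X)
      = psi (A * X) 0 ^ 2 + psi (A * X) 1 ^ 2 + psi (A * X) 2 ^ 2 by
    simp only [dotProduct, Fin.sum_univ_three]; ring]
  rw [hp0, hp1, hp2]
  rw [he] at hq
  linear_combination (4 * ((((A 0 0 + A 1 1 + A 2 2) * ε 0 - (A 0 0 * ε 0 + A 1 0 * ε 1 + A 2 0 * ε 2)) / 2)^2 + (((A 0 0 + A 1 1 + A 2 2) * ε 1 - (A 1 0 * ε 0 + A 1 1 * ε 1 + A 2 1 * ε 2)) / 2)^2 + (((A 0 0 + A 1 1 + A 2 2) * ε 2 - (A 2 0 * ε 0 + A 2 1 * ε 1 + A 2 2 * ε 2)) / 2)^2)) * hq - 4 * hsq
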